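/- arXiv:2505.13537 — 2 statements merged into one kernel-verified Lean document; each statement's English description precedes it below -/
import Mathlib

section
/- With S, ρ_EPR, and ε(η) = η²·ρ_EPR + (1-η²)·(I₄/4) as in the optimal CHSH strategy, and for η ∈ [0,1], the CHSH success probability (1/8)·Tr(S·ε(η)) + 1/2 exceeds the local bound 3/4 if and only if η² > 1/√2. -/
/-!
The two cross terms of the CHSH operator cancel, leaving `S = √2 (σz ⊗ σz + σx ⊗ σx)`.
Both `σz ⊗ σz` and `σx ⊗ σx` fix the EPR vector, so `Tr (S ρ_EPR) = 2√2`, while `Tr S = 0`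
kills the maximally mixed part. Hence the success probability is `1/2 + η² √2 / 4`,
which exceeds `3/4` exactly when `η² √2 > 1`.
-/

open Matrix Kronecker

noncomputable def sigmaX : Matrix (Fin 2) (Fin 2) ℂ := !![0, 1; 1, 0]
noncomputable def sigmaZ : Matrix (Fin 2) (Fin 2) ℂ := !![1, 0; 0, -1]

/-- The CHSH Bell operator for the optimal quantum strategy. -/
noncomputable def chshOp : Matrix ((Fin 2) × (Fin 2)) ((Fin 2) × (Fin 2)) ℂ :=
  sigmaZ ⊗ₖ (((Real.sqrt 2 : ℂ))⁻¹ • (sigmaZ + sigmaX)) +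
  sigmaZ ⊗ₖ (((Real.sqrt 2 : ℂ))⁻¹ • (sigmaZ - sigmaX)) +
  sigmaX ⊗ₖ (((Real.sqrt 2 : ℂ))⁻¹ • (sigmaZ + sigmaX)) -
  sigmaX ⊗ₖ (((Real.sqrt 2 : ℂ))⁻¹ • (sigmaZ - sigmaX))

noncomputable def eprVec : (Fin 2) × (Fin 2) → ℂ :=
  fun p => if p.1 = p.2 then ((Real.sqrt 2 : ℂ))⁻¹ else 0

noncomputable def eprState : Matrix ((Fin 2) × (Fin 2)) ((Fin 2) × (Fin 2)) ℂ :=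
  Matrix.vecMulVec eprVec (star eprVec)

noncomputable def depolarizedEPR (η : ℝ) :
    Matrix ((Fin 2) × (Fin 2)) ((Fin 2) × (Fin 2)) ℂ :=
  ((η ^ 2 : ℝ) : ℂ) • eprState +
    (((1 - η ^ 2 : ℝ)) : ℂ) •
      ((4 : ℂ)⁻¹ • (1 : Matrix ((Fin 2) × (Fin 2)) ((Fin 2) × (Fin 2)) ℂ))

theorem Matrix.kronecker_sub {l m n p α : Type*} [NonUnitalNonAssocRing α]
    (A : Matrix l m α) (B₁ B₂ : Matrix n p α) :
    A ⊗ₖ (B₁ - B₂) = A ⊗ₖ B₁ - A ⊗ₖ B₂ := by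
  ext
  simp [mul_sub]

theorem trace_mul_vecMulVec_of_mulVec_eq {n α : Type*} [Fintype n] [CommSemiring α]
    (A : Matrix n n α) (v w : n → α) (hv : A *ᵥ v = v) :
    (A * vecMulVec v w).trace = v ⬝ᵥ w := by
  rw [mul_vecMulVec, trace_vecMulVec, hv]

theorem ofReal_sqrt_two_sq : (Real.sqrt 2 : ℂ) ^ 2 = 2 := by
  norm_cast
  simp

theorem chshOp_eq :
    chshOp = (Real.sqrt 2 : ℂ) • (sigmaZ ⊗ₖ sigmaZ + sigmaX ⊗ₖ sigmaX) := by
  have h : ((Real.sqrt 2 : ℂ))⁻¹ = Real.sqrt 2 / 2 := by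
    field_simp
    exact ofReal_sqrt_two_sq.symm
  rw [chshOp, h]
  simp only [kronecker_smul, kronecker_add, kronecker_sub]
  module

theorem trace_sigmaX : sigmaX.trace = 0 := by simp [sigmaX, Matrix.trace_fin_two]

theorem trace_sigmaZ : sigmaZ.trace = 0 := by simp [sigmaZ, Matrix.trace_fin_two]

theorem trace_chshOp : chshOp.trace = 0 := by
  simp [chshOp_eq, trace_kronecker, trace_sigmaX, trace_sigmaZ]

theorem sigmaZ_kronecker_sigmaZ_mulVec_eprVec : (sigmaZ ⊗ₖ sigmaZ) *ᵥ eprVec = eprVec := by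
  ext ⟨i, j⟩
  fin_cases i <;> fin_cases j <;>
    simp [sigmaZ, eprVec, mulVec, dotProduct, Fintype.sum_prod_type]

theorem sigmaX_kronecker_sigmaX_mulVec_eprVec : (sigmaX ⊗ₖ sigmaX) *ᵥ eprVec = eprVec := by
  ext ⟨i, j⟩
  fin_cases i <;> fin_cases j <;>
    simp [sigmaX, eprVec, mulVec, dotProduct, Fintype.sum_prod_type]

theorem eprVec_dotProduct_star : eprVec ⬝ᵥ star eprVec = 1 := by
  have h : (Real.sqrt 2 : ℂ)⁻¹ * (Real.sqrt 2 : ℂ)⁻¹ = 2⁻¹ := by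
    rw [← mul_inv, ← sq, ofReal_sqrt_two_sq]
  simp [eprVec, dotProduct, Fintype.sum_prod_type, h]

theorem trace_chshOp_mul_eprState : (chshOp * eprState).trace = 2 * Real.sqrt 2 := by
  rw [chshOp_eq, eprState, smul_mul_assoc, trace_smul, add_mul, trace_add,
    trace_mul_vecMulVec_of_mulVec_eq _ _ _ sigmaZ_kronecker_sigmaZ_mulVec_eprVec,
    trace_mul_vecMulVec_of_mulVec_eq _ _ _ sigmaX_kronecker_sigmaX_mulVec_eprVec,
    eprVec_dotProduct_star, smul_eq_mul]
  ring

theorem trace_chshOp_mul_depolarizedEPR (η : ℝ) :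
    (chshOp * depolarizedEPR η).trace = ((η ^ 2 * (2 * Real.sqrt 2) : ℝ) : ℂ) := by
  simp only [depolarizedEPR, mul_add, Matrix.mul_smul, mul_one, trace_add, trace_smul,
    trace_chshOp, trace_chshOp_mul_eprState]
  push_cast
  ring

theorem chsh_tolerance_iff_general (η : ℝ) :
    (1 / 8 : ℝ) * ((chshOp * depolarizedEPR η).trace).re + 1 / 2 > 3 / 4 ↔
      η ^ 2 > (Real.sqrt 2)⁻¹ := by
  rw [trace_chshOp_mul_depolarizedEPR, Complex.ofReal_re, gt_iff_lt, gt_iff_lt,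
    inv_lt_iff_one_lt_mul₀ (by positivity)]
  constructor <;> intro h <;> linarith

/-- The CHSH success probability for the η-depolarized EPR pair exceeds the
local bound `3/4` if and only if `η² > 1/√2`. -/
theorem chsh_tolerance_iff (η : ℝ) (hη : η ∈ Set.Icc (0 : ℝ) 1) :
    (1 / 8 : ℝ) * ((chshOp * depolarizedEPR η).trace).re + 1 / 2 > 3 / 4 ↔
      η ^ 2 > (Real.sqrt 2)⁻¹ :=
  chsh_tolerance_iff_general η
end

section
/- There is no function a : Fin 3 → Fin 3 → ℤ with a(i)(j) ∈ {-1, 1} for all i, j such that simultaneously: the product a(i)(0)·a(i)(1)·a(i)(2) = 1 for each row i ∈ {0,1,2}, the products a(0)(j)·a(1)(j)·a(2)(j) = 1 for columns j ∈ {0,1}, and a(0)(2)·a(1)(2)·a(2)(2) = -1 for the third column. -/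
/-- Classical impossibility underlying the Magic Square Game: no ±1-valued 3×3
grid has all three row products equal to `1`, the first two column products
equal to `1`, and the third column product equal to `-1`. -/
theorem no_classical_magic_square :
    ¬ ∃ a : Fin 3 → Fin 3 → ℤ,
      (∀ i j, a i j = 1 ∨ a i j = -1) ∧
      (∀ i : Fin 3, a i 0 * a i 1 * a i 2 = 1) ∧
      (a 0 0 * a 1 0 * a 2 0 = 1) ∧
      (a 0 1 * a 1 1 * a 2 1 = 1) ∧
      (a 0 2 * a 1 2 * a 2 2 = -1) := by
  rintro ⟨a, hpm, hrow, hc0, hc1, hc2⟩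
  have h1 : (a 0 0 * a 0 1 * a 0 2) * ((a 1 0 * a 1 1 * a 1 2) * (a 2 0 * a 2 1 * a 2 2)) = 1 := by
    rw [hrow 0, hrow 1, hrow 2]; ring
  have h2 : (a 0 0 * a 1 0 * a 2 0) * ((a 0 1 * a 1 1 * a 2 1) * (a 0 2 * a 1 2 * a 2 2)) = -1 := by
    rw [hc0, hc1, hc2]; ring
  have h3 : (a 0 0 * a 0 1 * a 0 2) * ((a 1 0 * a 1 1 * a 1 2) * (a 2 0 * a 2 1 * a 2 2))
      = (a 0 0 * a 1 0 * a 2 0) * ((a 0 1 * a 1 1 * a 2 1) * (a 0 2 * a 1 2 * a 2 2)) := by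
    ring
  rw [h1, h2] at h3
  exact absurd h3 (by norm_num)
end
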